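/- On the complex plane, any smooth function u : ℂ → ℝ that is bounded below and satisfies 2|∂u|² ≤ Δu everywhere is constant. -/

import Mathlib

open Complex Set MeasureTheory intervalIntegral

private lemma he_expand (θ : ℝ) : Complex.exp (θ * I) = Real.cos θ • (1:ℂ) + Real.sin θ • I := by
  simp [Complex.exp_mul_I, Complex.real_smul, ← Complex.ofReal_cos, ← Complex.ofReal_sin]

private lemma hIe_expand (θ : ℝ) : I * Complex.exp (θ * I) = (-Real.sin θ) • (1:ℂ) + Real.cos θ • I := by
  rw [he_expand θ]
  simp only [Complex.real_smul, mul_one, Complex.ofReal_neg]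
  linear_combination (↑(Real.sin θ):ℂ) * Complex.I_sq

private lemma bilin_id (T : ℂ →L[ℝ] ℂ →L[ℝ] ℝ) (S : ℂ →L[ℝ] ℝ) (r co si : ℝ) (hr : r ≠ 0)
    (h : si^2 + co^2 = 1) :
    (T (co • 1 + si • I)) (r • (co • (1:ℂ) + si • I)) + S (co • (1:ℂ) + si • I)
      = r * ((T 1) 1 + (T I) I)
        - (1/r) * ((T (r • ((-si) • (1:ℂ) + co • I))) (r • ((-si) • (1:ℂ) + co • I))
            + S (-(r • (co • (1:ℂ) + si • I)))) := by
  simp only [map_add, _root_.map_smul, map_neg, ContinuousLinearMap.add_apply,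
    ContinuousLinearMap.smul_apply, ContinuousLinearMap.neg_apply, smul_eq_mul]
  field_simp
  ring_nf
  linear_combination (r * ((T 1) 1 + (T I) I)) * h

private lemma param_deriv {g g' : ℝ → ℝ → ℝ}
    (hg : Continuous fun q : ℝ × ℝ => g q.1 q.2)
    (hg' : Continuous fun q : ℝ × ℝ => g' q.1 q.2)
    (hd : ∀ r θ, HasDerivAt (fun r => g r θ) (g' r θ) r) (r₀ : ℝ) :
    HasDerivAt (fun r => ∫ θ in (0:ℝ)..(2*Real.pi), g r θ)
      (∫ θ in (0:ℝ)..(2*Real.pi), g' r₀ θ) r₀ := by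
  obtain ⟨C, hC⟩ := ((isCompact_Icc.prod isCompact_Icc :
      IsCompact (Icc (r₀-1) (r₀+1) ×ˢ Icc (0:ℝ) (2*Real.pi)))).exists_bound_of_continuousOn
      hg'.continuousOn
  refine (intervalIntegral.hasDerivAt_integral_of_dominated_loc_of_deriv_le
    (F := fun r θ => g r θ) (F' := fun r θ => g' r θ) (bound := fun _ => C)
    (Metric.ball_mem_nhds r₀ zero_lt_one) ?_ ?_ ?_ ?_ ?_ ?_).2
  · exact Filter.Eventually.of_forall fun x =>
      (hg.comp (Continuous.prodMk_right x)).aestronglyMeasurable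
  · exact (hg.comp (Continuous.prodMk_right r₀)).intervalIntegrable _ _
  · exact (hg'.comp (Continuous.prodMk_right r₀)).aestronglyMeasurable
  · refine Filter.Eventually.of_forall fun t ht x hx => ?_
    have ht' : t ∈ Icc (0:ℝ) (2*Real.pi) := by
      rw [Set.uIoc_of_le (by positivity : (0:ℝ) ≤ 2*Real.pi)] at ht
      exact ⟨le_of_lt ht.1, ht.2⟩
    have hx' : x ∈ Icc (r₀-1) (r₀+1) := by
      rw [Metric.mem_ball, Real.dist_eq] at hx
      constructor <;> [linarith [abs_lt.mp hx]; linarith [(abs_lt.mp hx).2]]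
    exact hC (x, t) ⟨hx', ht'⟩
  · exact intervalIntegrable_const
  · exact Filter.Eventually.of_forall fun t _ x _ => hd x t

set_option maxHeartbeats 1000000 in
private lemma liouville_aux (f : ℂ → ℝ) (hf : ContDiff ℝ (⊤ : ℕ∞) f) (hpos : ∀ z, 0 ≤ f z) (p : ℂ)
    (hsub : ∀ z, fderiv ℝ (fderiv ℝ f) z 1 1 + fderiv ℝ (fderiv ℝ f) z I I ≤ 0) :
    0 ≤ fderiv ℝ (fderiv ℝ f) p 1 1 + fderiv ℝ (fderiv ℝ f) p I I := by
  by_contra hneg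
  push_neg at hneg
  set D := fderiv ℝ f with hD
  set D2 := fderiv ℝ (fderiv ℝ f) with hD2
  set L : ℂ → ℝ := fun z => D2 z 1 1 + D2 z I I with hLdef
  have hfd : Differentiable ℝ f := hf.differentiable (by simp)
  have hD1 : ContDiff ℝ (⊤ : ℕ∞) D := hf.fderiv_right (by simp)
  have hDd : Differentiable ℝ D := hD1.differentiable (by simp)
  have hDc : Continuous D := hDd.continuous
  have hD2c : Continuous D2 := ((hD1.fderiv_right (m := (⊤ : ℕ∞)) (by simp)).continuous)
  have hLc : Continuous L := ((hD2c.clm_apply continuous_const).clm_apply continuous_const).add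
    ((hD2c.clm_apply continuous_const).clm_apply continuous_const)
  have hπ : 0 < Real.pi := Real.pi_pos
  set δ : ℝ := -(L p)/2 with hδdef
  have hδpos : 0 < δ := by
    have : L p < 0 := hneg
    rw [hδdef]; linarith
  obtain ⟨ρ, hρpos, hρ⟩ : ∃ ρ > 0, ∀ z ∈ Metric.closedBall p ρ, L z ≤ -δ := by
    have hop : IsOpen {z | L z < -δ} := isOpen_lt hLc continuous_const
    have hp : p ∈ {z | L z < -δ} := by
      have : L p < 0 := hneg
      simp only [Set.mem_setOf_eq, hδdef]; linarith
    obtain ⟨ε, hε, hball⟩ := Metric.isOpen_iff.mp hop p hp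
    refine ⟨ε/2, by linarith, fun z hz => le_of_lt (hball ?_)⟩
    have := Metric.mem_closedBall.mp hz
    exact Metric.mem_ball.mpr (lt_of_le_of_lt this (by linarith))
  set e : ℝ → ℂ := fun θ => Complex.exp (θ * I) with he_def
  set cc : ℝ → ℝ → ℂ := fun r θ => p + r * e θ with hcc_def
  have hecont : Continuous e := Complex.continuous_exp.comp (Complex.continuous_ofReal.mul continuous_const)
  have hccont : Continuous fun q : ℝ × ℝ => cc q.1 q.2 := by
    simp only [hcc_def]
    exact continuous_const.add ((Complex.continuous_ofReal.comp continuous_fst).mul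
      (hecont.comp continuous_snd))
  have hnorm_e : ∀ θ, ‖e θ‖ = 1 := fun θ => by
    rw [he_def]; simp [Complex.norm_exp_ofReal_mul_I]
  have hmem : ∀ r θ : ℝ, cc r θ ∈ Metric.closedBall p |r| := fun r θ => by
    simp only [hcc_def, Metric.mem_closedBall, dist_eq_norm, add_sub_cancel_left]
    rw [norm_mul, hnorm_e, mul_one, Complex.norm_real, Real.norm_eq_abs]
  have hcr : ∀ θ r : ℝ, HasDerivAt (fun r : ℝ => cc r θ) (e θ) r := by
    intro θ r
    have h1 : HasDerivAt (fun r : ℝ => (r:ℝ) • e θ) ((1:ℝ) • e θ) r := (hasDerivAt_id r).smul_const (e θ)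
    have h2 := h1.const_add p
    simpa [hcc_def, Complex.real_smul] using h2
  have hct : ∀ r θ : ℝ, HasDerivAt (fun θ : ℝ => cc r θ) ((r:ℂ) * (I * e θ)) θ := by
    intro r θ
    have h1 : HasDerivAt (fun θ : ℝ => ((θ:ℂ) * I)) I θ := by
      simpa using ((hasDerivAt_id θ).ofReal_comp).mul_const I
    have h2 : HasDerivAt (fun θ : ℝ => Complex.exp ((θ:ℂ)*I)) (Complex.exp ((θ:ℂ)*I) * I) θ := h1.cexp
    have h3 := (h2.const_mul ((r:ℂ))).const_add p
    have : (r:ℂ) * (Complex.exp ((θ:ℂ)*I) * I) = (r:ℂ) * (I * e θ) := by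
      rw [he_def]; ring
    rw [this] at h3
    simpa [hcc_def, he_def] using h3
  set A : ℝ → ℝ := fun r => ∫ θ in (0:ℝ)..(2*Real.pi), f (cc r θ) with hA_def
  set B : ℝ → ℝ := fun r => ∫ θ in (0:ℝ)..(2*Real.pi), (D (cc r θ)) (e θ) with hB_def
  set G : ℝ → ℝ := fun r => ∫ θ in (0:ℝ)..(2*Real.pi), (D (cc r θ)) ((r:ℂ) * e θ) with hG_def
  set H : ℝ → ℝ := fun r => ∫ θ in (0:ℝ)..(2*Real.pi),
    ((D2 (cc r θ) (e θ)) ((r:ℂ) * e θ) + (D (cc r θ)) (e θ)) with hH_def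
  have hre : Continuous fun q : ℝ × ℝ => (q.1 : ℂ) * e q.2 :=
    (Complex.continuous_ofReal.comp continuous_fst).mul (hecont.comp continuous_snd)
  have hA' : ∀ r, HasDerivAt A (B r) r := by
    intro r
    exact param_deriv (hf.continuous.comp hccont)
      ((hDc.comp hccont).clm_apply (hecont.comp continuous_snd))
      (fun r θ => (hfd _).hasFDerivAt.comp_hasDerivAt r (hcr θ r)) r
  have hG' : ∀ r, HasDerivAt G (H r) r := by
    intro r
    refine param_deriv (g := fun r θ => (D (cc r θ)) ((r:ℂ) * e θ))
      (g' := fun r θ => (D2 (cc r θ) (e θ)) ((r:ℂ) * e θ) + (D (cc r θ)) (e θ))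
      ((hDc.comp hccont).clm_apply hre)
      ((((hD2c.comp hccont).clm_apply (hecont.comp continuous_snd)).clm_apply hre).add
        ((hDc.comp hccont).clm_apply (hecont.comp continuous_snd)))
      (fun r θ => ?_) r
    have h1 : HasDerivAt (fun r => D (cc r θ)) (D2 (cc r θ) (e θ)) r :=
      (hDd _).hasFDerivAt.comp_hasDerivAt r (hcr θ r)
    have h2 : HasDerivAt (fun r : ℝ => (r:ℂ) * e θ) (e θ) r := by
      simpa [Complex.real_smul] using (hasDerivAt_id r).smul_const (e θ)
    simpa using h1.clm_apply h2
  have hGdiff : Differentiable ℝ G := fun r => (hG' r).differentiableAt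
  have hAdiff : Differentiable ℝ A := fun r => (hA' r).differentiableAt
  have hGB : ∀ r : ℝ, G r = r * B r := by
    intro r
    rw [hG_def, hB_def, ← intervalIntegral.integral_const_mul]
    refine intervalIntegral.integral_congr fun θ _ => ?_
    rw [← Complex.real_smul, _root_.map_smul, smul_eq_mul]
  have hG0 : G 0 = 0 := by
    have := hGB 0; rw [this]; ring
  have hccθ : ∀ r : ℝ, Continuous fun θ => cc r θ := fun r =>
    hccont.comp (Continuous.prodMk_right r)
  have hHval : ∀ r : ℝ, r ≠ 0 → H r = r * ∫ θ in (0:ℝ)..(2*Real.pi), L (cc r θ) := by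
    intro r hr
    set K : ℝ → ℝ := fun θ => (D (cc r θ)) ((r:ℂ) * (I * e θ)) with hK_def
    set K' : ℝ → ℝ := fun θ =>
      (D2 (cc r θ) ((r:ℂ) * (I * e θ))) ((r:ℂ) * (I * e θ)) + (D (cc r θ)) (-((r:ℂ) * e θ))
      with hK'_def
    have hK : ∀ θ, HasDerivAt K (K' θ) θ := by
      intro θ
      have h1 : HasDerivAt (fun θ => D (cc r θ)) (D2 (cc r θ) ((r:ℂ) * (I * e θ))) θ :=
        (hDd _).hasFDerivAt.comp_hasDerivAt θ (hct r θ)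
      have h1' : HasDerivAt (fun θ : ℝ => ((θ:ℂ) * I)) I θ := by
        simpa using ((hasDerivAt_id θ).ofReal_comp).mul_const I
      have h2' : HasDerivAt (fun θ : ℝ => Complex.exp ((θ:ℂ)*I))
          (Complex.exp ((θ:ℂ)*I) * I) θ := h1'.cexp
      have h2'' := h2'.const_mul ((r:ℂ) * I)
      have heq : (r:ℂ) * I * (Complex.exp ((θ:ℂ)*I) * I) = -((r:ℂ) * e θ) := by
        rw [he_def]
        have := Complex.I_sq
        linear_combination ((r:ℂ) * Complex.exp ((θ:ℂ)*I)) * this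
      rw [heq] at h2''
      have h2 : HasDerivAt (fun θ : ℝ => (r:ℂ) * (I * e θ)) (-((r:ℂ) * e θ)) θ := by
        have : (fun θ : ℝ => (r:ℂ) * I * Complex.exp ((θ:ℂ)*I)) =
            (fun θ : ℝ => (r:ℂ) * (I * e θ)) := by
          funext θ; rw [he_def]; ring
        rwa [this] at h2''
      simpa [hK'_def] using h1.clm_apply h2
    have hKper : K (2*Real.pi) = K 0 := by
      rw [hK_def]
      have h2 : ((2*Real.pi : ℝ):ℂ) * I = 2*(Real.pi:ℂ)*I := by push_cast; ring
      simp only [he_def, hcc_def, Complex.ofReal_zero, zero_mul, Complex.exp_zero, h2,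
        Complex.exp_two_pi_mul_I]
    have hK'cont : Continuous K' := by
      rw [hK'_def]
      have hv : Continuous fun θ : ℝ => (r:ℂ) * (I * e θ) :=
        continuous_const.mul (continuous_const.mul hecont)
      exact (((hD2c.comp (hccθ r)).clm_apply hv).clm_apply hv).add
        ((hDc.comp (hccθ r)).clm_apply (continuous_const.mul hecont).neg)
    have hKint : ∫ θ in (0:ℝ)..(2*Real.pi), K' θ = 0 := by
      rw [intervalIntegral.integral_eq_sub_of_hasDerivAt (fun θ _ => hK θ)
        (hK'cont.intervalIntegrable _ _), hKper, sub_self]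
    have hpt : ∀ θ, (D2 (cc r θ) (e θ)) ((r:ℂ) * e θ) + (D (cc r θ)) (e θ)
        = r * L (cc r θ) - (1/r) * K' θ := by
      intro θ
      have e1 : e θ = Real.cos θ • (1:ℂ) + Real.sin θ • I := by
        rw [he_def]; exact he_expand θ
      have e2 : (r:ℂ) * e θ = r • (Real.cos θ • (1:ℂ) + Real.sin θ • I) := by
        rw [← e1, Complex.real_smul]
      have e3 : (r:ℂ) * (I * e θ) = r • ((-Real.sin θ) • (1:ℂ) + Real.cos θ • I) := by
        have : I * e θ = (-Real.sin θ) • (1:ℂ) + Real.cos θ • I := by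
          rw [he_def]; exact hIe_expand θ
        rw [← this, Complex.real_smul]
      have h1 := bilin_id (D2 (cc r θ)) (D (cc r θ)) r (Real.cos θ) (Real.sin θ) hr
        (Real.sin_sq_add_cos_sq θ)
      rw [hK'_def]
      simp only [hLdef]
      rw [e2, e3, e1]
      exact h1
    have hint1 : IntervalIntegrable (fun θ => r * L (cc r θ)) MeasureTheory.volume 0 (2*Real.pi) :=
      ((continuous_const.mul (hLc.comp (hccθ r))).intervalIntegrable _ _)
    have hint2 : IntervalIntegrable (fun θ => (1/r) * K' θ) MeasureTheory.volume 0 (2*Real.pi) :=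
      ((continuous_const.mul hK'cont).intervalIntegrable _ _)
    calc H r = ∫ θ in (0:ℝ)..(2*Real.pi), (r * L (cc r θ) - (1/r) * K' θ) := by
          rw [hH_def]; exact intervalIntegral.integral_congr fun θ _ => hpt θ
      _ = (∫ θ in (0:ℝ)..(2*Real.pi), r * L (cc r θ))
            - ∫ θ in (0:ℝ)..(2*Real.pi), (1/r) * K' θ :=
          intervalIntegral.integral_sub hint1 hint2
      _ = r * ∫ θ in (0:ℝ)..(2*Real.pi), L (cc r θ) := by
          rw [intervalIntegral.integral_const_mul, intervalIntegral.integral_const_mul, hKint]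
          ring
  have hLnonpos : ∀ z, L z ≤ 0 := hsub
  have hint_nonpos : ∀ r : ℝ, (∫ θ in (0:ℝ)..(2*Real.pi), L (cc r θ)) ≤ 0 := by
    intro r
    have h := intervalIntegral.integral_mono_on (a := 0) (b := 2*Real.pi)
      (f := fun θ => L (cc r θ)) (g := fun _ => (0:ℝ)) (by linarith [Real.pi_pos])
      ((hLc.comp (hccθ r)).intervalIntegrable _ _)
      (_root_.intervalIntegrable_const : IntervalIntegrable _ MeasureTheory.volume _ _)
      (fun θ _ => hLnonpos _)
    simpa using h
  have hint_rho : ∀ r : ℝ, 0 < r → r ≤ ρ →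
      (∫ θ in (0:ℝ)..(2*Real.pi), L (cc r θ)) ≤ 2*Real.pi*(-δ) := by
    intro r hr hrρ
    have h0 : (∫ θ in (0:ℝ)..(2*Real.pi), (-δ:ℝ)) = 2*Real.pi*(-δ) := by
      simp [smul_eq_mul]
    rw [← h0]
    refine intervalIntegral.integral_mono_on (by linarith [Real.pi_pos])
      ((hLc.comp (hccθ r)).intervalIntegrable _ _) (_root_.intervalIntegrable_const : IntervalIntegrable _ MeasureTheory.volume _ _)
      (fun θ _ => ?_)
    refine hρ _ (Metric.closedBall_subset_closedBall ?_ (hmem r θ))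
    rw [abs_of_pos hr]; exact hrρ
  have hH_nonpos : ∀ r : ℝ, 0 < r → H r ≤ 0 := by
    intro r hr
    rw [hHval r (ne_of_gt hr)]
    exact mul_nonpos_of_nonneg_of_nonpos hr.le (hint_nonpos r)
  have hH_rho : ∀ r : ℝ, 0 < r → r ≤ ρ → H r ≤ -(2*Real.pi*δ)*r := by
    intro r hr hrρ
    rw [hHval r (ne_of_gt hr)]
    have := mul_le_mul_of_nonneg_left (hint_rho r hr hrρ) hr.le
    linarith [this]
  -- Step: G ρ ≤ -π δ ρ²
  have hGρ : G ρ ≤ -(Real.pi*δ*ρ^2) := by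
    set φ : ℝ → ℝ := fun r => G r + Real.pi*δ*r^2 with hφ_def
    have hφ' : ∀ r, HasDerivAt φ (H r + Real.pi*δ*(2*r)) r := by
      intro r
      have h2 : HasDerivAt (fun r : ℝ => Real.pi*δ*r^2) (Real.pi*δ*(2*r)) r := by
        have := (hasDerivAt_pow 2 r).const_mul (Real.pi*δ)
        simpa using this
      exact (hG' r).add h2
    have hanti : AntitoneOn φ (Set.Icc 0 ρ) := by
      refine antitoneOn_of_deriv_nonpos (convex_Icc 0 ρ)
        ((hGdiff.continuous.add (continuous_const.mul (continuous_pow 2))).continuousOn)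
        (fun x _ => (hφ' x).differentiableAt.differentiableWithinAt) (fun x hx => ?_)
      rw [interior_Icc] at hx
      rw [(hφ' x).deriv]
      have := hH_rho x hx.1 hx.2.le
      nlinarith [this]
    have h0 : φ ρ ≤ φ 0 := hanti (Set.mem_Icc.mpr ⟨le_refl 0, hρpos.le⟩)
      (Set.mem_Icc.mpr ⟨hρpos.le, le_refl ρ⟩) hρpos.le
    have hφ0 : φ 0 = 0 := by simp [hφ_def, hG0]
    have hφρ : φ ρ = G ρ + Real.pi*δ*ρ^2 := rfl
    rw [hφ0, hφρ] at h0
    linarith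
  have hGanti : ∀ R, ρ ≤ R → G R ≤ G ρ := by
    have hanti : AntitoneOn G (Set.Ici ρ) := by
      refine antitoneOn_of_deriv_nonpos (convex_Ici ρ) hGdiff.continuous.continuousOn
        (fun x _ => (hG' x).differentiableAt.differentiableWithinAt) (fun x hx => ?_)
      rw [interior_Ici] at hx
      rw [(hG' x).deriv]
      exact hH_nonpos x (lt_trans hρpos hx)
    exact fun R hR => hanti (Set.mem_Ici.mpr le_rfl) (Set.mem_Ici.mpr hR) hR
  set M : ℝ := Real.pi*δ*ρ^2 with hM_def
  have hMpos : 0 < M := by rw [hM_def]; positivity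
  have hBle : ∀ r, ρ ≤ r → B r ≤ -M/r := by
    intro r hr
    have hrpos : 0 < r := lt_of_lt_of_le hρpos hr
    have h1 : r * B r ≤ -M := by
      rw [← hGB]; rw [hM_def]; exact le_trans (hGanti r hr) hGρ
    refine (le_div_iff₀ hrpos).mpr ?_
    rw [mul_comm]
    exact h1
  have hA0 : ∀ r, 0 ≤ A r := fun r =>
    intervalIntegral.integral_nonneg (by linarith [Real.pi_pos]) (fun θ _ => hpos _)
  set ψ : ℝ → ℝ := fun r => A r + M * Real.log r with hψ_def
  have hψ' : ∀ x, 0 < x → HasDerivAt ψ (B x + M * x⁻¹) x := by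
    intro x hx
    exact (hA' x).add ((Real.hasDerivAt_log (ne_of_gt hx)).const_mul M)
  have hψanti : AntitoneOn ψ (Set.Ici ρ) := by
    refine antitoneOn_of_deriv_nonpos (convex_Ici ρ)
      (hAdiff.continuous.continuousOn.add
        ((Real.continuousOn_log.mono ?_).const_smul M |>.congr ?_))
      (fun x hx => ?_) (fun x hx => ?_)
    · intro x hx; exact ne_of_gt (lt_of_lt_of_le hρpos hx)
    · intro x _; simp [smul_eq_mul]
    · rw [interior_Ici] at hx
      exact (hψ' x (lt_trans hρpos hx)).differentiableAt.differentiableWithinAt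
    · rw [interior_Ici] at hx
      have hxpos : 0 < x := lt_trans hρpos hx
      rw [(hψ' x hxpos).deriv]
      have h1 := hBle x hx.le
      have h2 : M * x⁻¹ = M/x := by ring
      have h3 : -M/x = -(M/x) := by ring
      rw [h2]
      linarith
  set R : ℝ := Real.exp (A ρ / M + Real.log ρ + 1) with hR_def
  have hRge : ρ ≤ R := by
    have h1 : Real.log ρ ≤ A ρ / M + Real.log ρ + 1 := by
      have := div_nonneg (hA0 ρ) hMpos.le
      linarith
    calc ρ = Real.exp (Real.log ρ) := (Real.exp_log hρpos).symm
      _ ≤ R := Real.exp_le_exp.mpr h1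
  have hfin := hψanti (Set.mem_Ici.mpr le_rfl) (Set.mem_Ici.mpr hRge) hRge
  have hψR : ψ R = A R + M * Real.log R := rfl
  have hψρ : ψ ρ = A ρ + M * Real.log ρ := rfl
  rw [hψR, hψρ, hR_def, Real.log_exp] at hfin
  have hAR := hA0 R
  have hMA : M * (A ρ / M) = A ρ := by field_simp
  nlinarith [hfin, hAR, hMpos, hMA]

private lemma arith1 (E A B U V : ℝ) (hE : 0 < E)
    (h1 : 2 * ((A^2+B^2)/4) ≤ (1/4)*(U+V)) :
    E * (A*A) - E*U + (E*(B*B) - E*V) ≤ 0 := by nlinarith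

private lemma arith2 (E A B U V : ℝ) (hE : 0 < E)
    (h1 : 2 * ((A^2+B^2)/4) ≤ (1/4)*(U+V))
    (h2 : 0 ≤ E * (A*A) - E*U + (E*(B*B) - E*V)) : A = 0 ∧ B = 0 := by
  have hab : A^2 + B^2 ≤ 0 := by nlinarith
  constructor <;> nlinarith [sq_nonneg A, sq_nonneg B]


/-- The Wirtinger derivative ∂u/∂z of a real-valued function on ℂ. -/
noncomputable def wirt (f : ℂ → ℝ) (z : ℂ) : ℂ :=
  (1/2 : ℂ) * ((fderiv ℝ f z 1 : ℝ) - Complex.I * (fderiv ℝ f z Complex.I : ℝ))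

/-- The Laplacian `Δ = ∂∂̄ = (1/4)(∂²/∂x² + ∂²/∂y²)` of a real-valued function on ℂ. -/
noncomputable def lap (f : ℂ → ℝ) (z : ℂ) : ℝ :=
  (1/4) * (fderiv ℝ (fun w => fderiv ℝ f w 1) z 1 +
    fderiv ℝ (fun w => fderiv ℝ f w Complex.I) z Complex.I)

/-- Any smooth `u : ℂ → ℝ` which is bounded below and satisfies `2|∂u|² ≤ Δu`
everywhere is constant (parabolicity of ℂ). -/
theorem bounded_below_solution_constant (u : ℂ → ℝ) (hu : ContDiff ℝ (⊤ : ℕ∞) u)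
    (c : ℝ) (hbd : ∀ z, c ≤ u z)
    (hineq : ∀ z, 2 * ‖wirt u z‖ ^ 2 ≤ lap u z) :
    ∀ z w : ℂ, u z = u w := by
  intro z₀ w₀
  set g : ℂ → ℝ := fun z => Real.exp (-(u z)) with hg_def
  have hud : Differentiable ℝ u := hu.differentiable (by simp)
  have hu1 : ContDiff ℝ (⊤ : ℕ∞) (fderiv ℝ u) := hu.fderiv_right (by simp)
  have hu1d : Differentiable ℝ (fderiv ℝ u) := hu1.differentiable (by simp)
  have hgc : ContDiff ℝ (⊤ : ℕ∞) g := Real.contDiff_exp.comp hu.neg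
  have hDg : ∀ z, HasFDerivAt g ((-Real.exp (-(u z))) • fderiv ℝ u z) z := by
    intro z
    have h1 : HasFDerivAt (fun z => -(u z)) (-(fderiv ℝ u z)) z := (hud z).hasFDerivAt.neg
    have h2 := (Real.hasDerivAt_exp (-(u z))).comp_hasFDerivAt z h1
    have h3 : Real.exp (-(u z)) • -(fderiv ℝ u z) = (-Real.exp (-(u z))) • fderiv ℝ u z := by
      rw [smul_neg, ← neg_smul]
    rw [h3] at h2
    exact h2
  have hfderivg : fderiv ℝ g = fun z => (-Real.exp (-(u z))) • fderiv ℝ u z :=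
    funext fun z => (hDg z).fderiv
  have hD2g : ∀ (z : ℂ) (a b : ℂ), fderiv ℝ (fderiv ℝ g) z a b
      = Real.exp (-(u z)) * ((fderiv ℝ u z a) * (fderiv ℝ u z b))
        - Real.exp (-(u z)) * (fderiv ℝ (fderiv ℝ u) z a b) := by
    intro z a b
    have hc : HasFDerivAt (fun z => -Real.exp (-(u z))) (Real.exp (-(u z)) • fderiv ℝ u z) z := by
      have h := (hDg z).neg
      simp only [neg_smul, neg_neg] at h
      exact h
    have hh : HasFDerivAt (fderiv ℝ u) (fderiv ℝ (fderiv ℝ u) z) z := (hu1d z).hasFDerivAt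
    have hsm := hc.smul hh
    have heq : fderiv ℝ (fderiv ℝ g) z
        = (-Real.exp (-(u z))) • fderiv ℝ (fderiv ℝ u) z
          + (Real.exp (-(u z)) • fderiv ℝ u z).smulRight (fderiv ℝ u z) := by
      rw [hfderivg]; exact hsm.fderiv
    rw [heq]
    simp only [ContinuousLinearMap.add_apply, ContinuousLinearMap.coe_smul',
      Pi.smul_apply, ContinuousLinearMap.smulRight_apply, ContinuousLinearMap.smul_apply,
      smul_eq_mul]
    ring
  have heval : ∀ (F : ℂ → ℂ →L[ℝ] ℝ), Differentiable ℝ F → ∀ (z v w : ℂ),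
      fderiv ℝ (fun y => F y v) z w = (fderiv ℝ F z w) v := by
    intro F hF z v w
    rw [fderiv_clm_apply (hF z) (differentiableAt_const v)]
    simp
  have hlap : ∀ z, lap u z
      = (1/4) * (fderiv ℝ (fderiv ℝ u) z 1 1 + fderiv ℝ (fderiv ℝ u) z I I) := by
    intro z
    rw [lap, heval _ hu1d, heval _ hu1d]
  have hwirt : ∀ z, ‖wirt u z‖^2 = ((fderiv ℝ u z 1)^2 + (fderiv ℝ u z I)^2)/4 := by
    intro z
    rw [wirt, Complex.sq_norm]
    simp [Complex.normSq_apply]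
    ring
  have hgpos : ∀ z, 0 ≤ g z := fun z => (Real.exp_pos _).le
  have hsubg : ∀ z, fderiv ℝ (fderiv ℝ g) z 1 1 + fderiv ℝ (fderiv ℝ g) z I I ≤ 0 := by
    intro z
    rw [hD2g z 1 1, hD2g z I I]
    have h1 := hineq z
    rw [hlap z, hwirt z] at h1
    exact arith1 _ _ _ _ _ (Real.exp_pos (-(u z))) h1
  have hge := fun z => liouville_aux g hgc hgpos z hsubg
  have hzero : ∀ z, fderiv ℝ u z = 0 := by
    intro z
    have h2 := hge z
    rw [hD2g z 1 1, hD2g z I I] at h2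
    have h1 := hineq z
    rw [hlap z, hwirt z] at h1
    obtain ⟨ha0, hb0⟩ := arith2 _ _ _ _ _ (Real.exp_pos (-(u z))) h1 h2
    ext v
    have hv : v = v.re • (1:ℂ) + v.im • I := by
      simp [Complex.real_smul, Complex.re_add_im]
    calc fderiv ℝ u z v = fderiv ℝ u z (v.re • (1:ℂ) + v.im • I) := by rw [← hv]
      _ = v.re • (fderiv ℝ u z 1) + v.im • (fderiv ℝ u z I) := by
            rw [map_add, _root_.map_smul, _root_.map_smul]
      _ = 0 := by rw [ha0, hb0]; simp
  exact is_const_of_fderiv_eq_zero hud hzero z₀ w₀
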